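/- arXiv:1903.10769 — 2 statements merged into one kernel-verified Lean document; each statement's English description precedes it below -/
import Mathlib

section
/- For θ > 0 and H ∈ (0,1), let μ_θ = N(0, c_H / θ^{2H}) be the centered Gaussian distribution on ℝ with variance c_H θ^{-2H}, where c_H > 0 is a fixed constant. Fix 0 < m < M < ∞ and p > 1/2, and define d_{CF,p}(μ,ν)² = ∫_ℝ (μ̂(ξ) - ν̂(ξ))² g_p(ξ) dξ with g_p(ξ) = c_p(1+ξ²)^{-p} and μ̂ the characteristic function. Then there exists a constant c = c(m,M,H,p) > 0 such that for all θ₁, θ₂ ∈ [m,M], d_{CF,p}(μ_{θ₁}, μ_{θ₂}) ≥ c |θ₁ - θ₂|. -/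
open MeasureTheory ProbabilityTheory

/-- The characteristic function of a measure on `ℝ`. -/
noncomputable def charFun1 (μ : Measure ℝ) (ξ : ℝ) : ℂ :=
  ∫ x, Complex.exp (Complex.I * ξ * x) ∂μ

/-- The characteristic-function based distance `d_{CF,p}` on probability measures on `ℝ`,
with kernel `g_p(ξ) = c_p (1+ξ²)^{-p}`. -/
noncomputable def dCF1 (p cp : ℝ) (μ ν : Measure ℝ) : ℝ :=
  Real.sqrt (∫ ξ : ℝ, ‖charFun1 μ ξ - charFun1 ν ξ‖^2 * (cp * (1 + ξ^2) ^ (-p)))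

/-!
The characteristic function of `N(0, v)` is `ξ ↦ exp (-v ξ² / 2)`, so on the window
`1 ≤ ξ ≤ 2`, where the kernel is at least `c_p 5^{-p}`, the two characteristic functions differ
by `exp (-c_H θ₁^{-2H} t) - exp (-c_H θ₂^{-2H} t)` with `t = ξ²/2 ∈ [1/2, 2]`. The derivative of
`θ ↦ exp (-c_H θ^{-2H} t)` is bounded below on `[m, M]` uniformly in such `t`, so by the mean value
theorem this difference is at least a constant times `|θ₁ - θ₂|`; integrating its square over the
window gives the bound.
-/

open Real Set
open scoped NNReal

lemma charFun1_eq_charFun (μ : Measure ℝ) : charFun1 μ = charFun μ := by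
  ext ξ
  simp only [charFun1, charFun_apply_real]
  congr 1 with x
  ring_nf

lemma charFun1_gaussianReal_zero (v : ℝ≥0) (ξ : ℝ) :
    charFun1 (gaussianReal 0 v) ξ = ((exp (-(v * ξ ^ 2 / 2)) : ℝ) : ℂ) := by
  rw [charFun1_eq_charFun, charFun_gaussianReal]
  push_cast
  ring_nf

lemma integrable_one_add_sq_rpow_neg {p : ℝ} (hp : 1 / 2 < p) :
    Integrable (fun ξ : ℝ ↦ (1 + ξ ^ 2) ^ (-p)) := by
  have h := integrable_rpow_neg_one_add_norm_sq (E := ℝ) (μ := volume)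
    (r := 2 * p) (by simp; linarith)
  simpa [Real.norm_eq_abs, sq_abs, show -(2 * p) / 2 = -p by ring] using h

lemma integral_one_add_sq_rpow_neg_pos {p : ℝ} (hp : 1 / 2 < p) :
    0 < ∫ ξ : ℝ, (1 + ξ ^ 2) ^ (-p) := by
  have hpos (ξ : ℝ) : 0 < (1 + ξ ^ 2) ^ (-p) := by positivity
  rw [integral_pos_iff_support_of_nonneg (fun ξ ↦ (hpos ξ).le)
    (integrable_one_add_sq_rpow_neg hp), Function.support_eq_univ fun ξ ↦ (hpos ξ).ne']
  simp

lemma integrable_norm_charFun1_sub_sq_mul {μ ν : Measure ℝ} [IsProbabilityMeasure μ]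
    [IsProbabilityMeasure ν] {p : ℝ} (hp : 1 / 2 < p) (cp : ℝ) :
    Integrable fun ξ : ℝ ↦ ‖charFun1 μ ξ - charFun1 ν ξ‖ ^ 2 * (cp * (1 + ξ ^ 2) ^ (-p)) := by
  refine ((integrable_one_add_sq_rpow_neg hp).const_mul cp).bdd_mul (c := 4) ?_ ?_
  · rw [charFun1_eq_charFun, charFun1_eq_charFun]
    fun_prop
  · refine Filter.Eventually.of_forall fun ξ ↦ ?_
    rw [charFun1_eq_charFun, charFun1_eq_charFun, norm_pow, norm_norm]
    have := (norm_sub_le (charFun μ ξ) (charFun ν ξ)).trans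
      (add_le_add (norm_charFun_le_one ξ) (norm_charFun_le_one ξ))
    nlinarith [norm_nonneg (charFun μ ξ - charFun ν ξ)]

lemma mul_sqrt_le_dCF1 {μ ν : Measure ℝ} [IsProbabilityMeasure μ] [IsProbabilityMeasure ν]
    {p cp δ : ℝ} (hp : 1 / 2 < p) (hcp : 0 ≤ cp) (hδ : 0 ≤ δ)
    (hle : ∀ ξ ∈ Icc (1 : ℝ) 2, δ ≤ ‖charFun1 μ ξ - charFun1 ν ξ‖) :
    δ * √(cp * 5 ^ (-p)) ≤ dCF1 p cp μ ν := by
  set G : ℝ → ℝ := fun ξ ↦ ‖charFun1 μ ξ - charFun1 ν ξ‖ ^ 2 * (cp * (1 + ξ ^ 2) ^ (-p))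
  have hG : Integrable G := integrable_norm_charFun1_sub_sq_mul hp cp
  have hG_nonneg : 0 ≤ G := fun ξ ↦ by positivity
  have hG_ge : ∀ ξ ∈ Icc (1 : ℝ) 2, δ ^ 2 * (cp * 5 ^ (-p)) ≤ G ξ := by
    intro ξ hξ
    have hkernel : (5 : ℝ) ^ (-p) ≤ (1 + ξ ^ 2) ^ (-p) :=
      rpow_le_rpow_of_nonpos (by positivity) (by nlinarith [hξ.1, hξ.2]) (by linarith)
    exact mul_le_mul (pow_le_pow_left₀ hδ (hle ξ hξ) 2)
      (mul_le_mul_of_nonneg_left hkernel hcp) (by positivity) (by positivity)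
  calc δ * √(cp * 5 ^ (-p)) = √(δ ^ 2 * (cp * 5 ^ (-p))) := by
        rw [sqrt_mul (sq_nonneg δ), sqrt_sq hδ]
    _ ≤ √(∫ ξ in Icc (1 : ℝ) 2, G ξ) := by
        gcongr
        have := setIntegral_ge_of_const_le_real measurableSet_Icc
          (by simp [Real.volume_Icc]) hG_ge hG.integrableOn
        norm_num at this
        exact this
    _ ≤ dCF1 p cp μ ν := sqrt_le_sqrt (setIntegral_le_integral hG (.of_forall hG_nonneg))

theorem Convex.mul_abs_sub_le_abs_image_sub_of_le_deriv {D : Set ℝ} (hD : Convex ℝ D)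
    {f : ℝ → ℝ} (hf : ContinuousOn f D) (hf' : DifferentiableOn ℝ f (interior D)) {C : ℝ}
    (hf'_ge : ∀ x ∈ interior D, C ≤ deriv f x) {x y : ℝ} (hx : x ∈ D) (hy : y ∈ D) :
    C * |x - y| ≤ |f x - f y| := by
  have hmono := hD.mul_sub_le_image_sub_of_le_deriv hf hf' hf'_ge
  rcases le_total x y with hxy | hyx
  · rw [abs_sub_comm x, abs_sub_comm (f x), abs_of_nonneg (sub_nonneg.2 hxy)]
    exact (hmono x hx y hy hxy).trans (le_abs_self _)
  · rw [abs_of_nonneg (sub_nonneg.2 hyx)]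
    exact (hmono y hy x hx hyx).trans (le_abs_self _)

lemma mul_abs_sub_le_abs_exp_neg_rpow_sub {H cH m M a b t : ℝ} (hH : 0 ≤ H) (hcH : 0 ≤ cH)
    (hm : 0 < m) (ha : 0 ≤ a) (ht : t ∈ Icc a b) {θ₁ θ₂ : ℝ} (h₁ : θ₁ ∈ Icc m M)
    (h₂ : θ₂ ∈ Icc m M) :
    2 * H * cH * a * M ^ (-(2 * H) - 1) * exp (-(cH * m ^ (-(2 * H)) * b)) * |θ₁ - θ₂| ≤
      |exp (-(cH * θ₁ ^ (-(2 * H)) * t)) - exp (-(cH * θ₂ ^ (-(2 * H)) * t))| := by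
  set f : ℝ → ℝ := fun θ ↦ exp (-(cH * θ ^ (-(2 * H)) * t))
  have hderiv : ∀ θ ∈ Icc m M, HasDerivAt f
      (exp (-(cH * θ ^ (-(2 * H)) * t)) * (2 * H * cH * t * θ ^ (-(2 * H) - 1))) θ := by
    intro θ hθ
    convert (((hasDerivAt_rpow_const (p := -(2 * H)) (.inl (hm.trans_le hθ.1).ne')).const_mul
      cH).mul_const t).neg.exp using 1
    · ext; simp [f]
    · simp only [Pi.neg_apply]; ring
  refine (convex_Icc m M).mul_abs_sub_le_abs_image_sub_of_le_deriv
    (fun θ hθ ↦ (hderiv θ hθ).continuousAt.continuousWithinAt)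
    (fun θ hθ ↦ (hderiv θ (interior_subset hθ)).differentiableAt.differentiableWithinAt)
    (fun θ hθ ↦ ?_) h₁ h₂
  rw [interior_Icc] at hθ
  have hθ_pos : 0 < θ := hm.trans hθ.1
  rw [(hderiv θ (Ioo_subset_Icc_self hθ)).deriv, mul_comm (exp _)]
  have ht_nonneg : 0 ≤ t := ha.trans ht.1
  have hM : 0 < M := hθ_pos.trans hθ.2
  gcongr ?_ * exp ?_
  · gcongr 2 * H * cH * ?_ * ?_
    · exact ht.1
    · exact rpow_le_rpow_of_nonpos hθ_pos hθ.2.le (by linarith)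
  · gcongr -(cH * ?_ * ?_)
    · exact rpow_le_rpow_of_nonpos hm hθ.1.le (by linarith)
    · exact ht.2

lemma coe_toNNReal_div_rpow {cH θ : ℝ} (hcH : 0 < cH) (hθ : 0 < θ) (r : ℝ) :
    ((cH / θ ^ r).toNNReal : ℝ) = cH * θ ^ (-r) := by
  rw [coe_toNNReal _ (by positivity), rpow_neg hθ.le, div_eq_mul_inv]

theorem stmt10 (H cH m M p cp : ℝ) (hH : H ∈ Set.Ioo (0:ℝ) 1) (hcH : 0 < cH)
    (hm : 0 < m) (hmM : m < M) (hp : 1/2 < p)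
    (hcp : cp = (∫ ξ : ℝ, (1 + ξ^2) ^ (-p))⁻¹) :
    ∃ c > 0, ∀ θ₁ ∈ Set.Icc m M, ∀ θ₂ ∈ Set.Icc m M,
      c * |θ₁ - θ₂| ≤
        dCF1 p cp (gaussianReal 0 (Real.toNNReal (cH / θ₁ ^ (2*H))))
          (gaussianReal 0 (Real.toNNReal (cH / θ₂ ^ (2*H)))) := by
  have hcp_pos : 0 < cp := hcp ▸ inv_pos.2 (integral_one_add_sq_rpow_neg_pos hp)
  have hH_pos : 0 < H := hH.1
  have hM_pos : 0 < M := hm.trans hmM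
  set c₀ := 2 * H * cH * (1 / 2) * M ^ (-(2 * H) - 1) * exp (-(cH * m ^ (-(2 * H)) * 2))
  refine ⟨c₀ * √(cp * 5 ^ (-p)), by positivity, fun θ₁ h₁ θ₂ h₂ ↦ ?_⟩
  rw [mul_right_comm]
  refine mul_sqrt_le_dCF1 hp hcp_pos.le (by positivity) fun ξ hξ ↦ ?_
  have hξ' : ξ ^ 2 / 2 ∈ Icc (1 / 2 : ℝ) 2 := ⟨by nlinarith [hξ.1], by nlinarith [hξ.1, hξ.2]⟩
  rw [charFun1_gaussianReal_zero, charFun1_gaussianReal_zero, ← Complex.ofReal_sub,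
    Complex.norm_real, norm_eq_abs, coe_toNNReal_div_rpow hcH (hm.trans_le h₁.1),
    coe_toNNReal_div_rpow hcH (hm.trans_le h₂.1), mul_div_assoc, mul_div_assoc]
  exact mul_abs_sub_le_abs_exp_neg_rpow_sub hH_pos.le hcH.le hm (by norm_num) hξ' h₁ h₂
end

section
/- Let d = 2 and for θ ∈ [m, M] ⊂ (0,∞) and ε ∈ ℝ define b_θ : ℝ² → ℝ² by b_θ(z) = -θ z ψ((1+|z|²)^{1/2}) + ε z^⊥, where z^⊥ = (-z₂, z₁) and ψ(x) = e^x/(1+e^x) is the sigmoid function. Then for all z, w ∈ ℝ² and θ ∈ [m,M], ⟨b_θ(z) - b_θ(w), z - w⟩ ≤ -(m/2)|z - w|². -/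
/-!
Split `b_θ(z) = -φ(|z|) z + ε z^⊥` with `φ(r) = θ ψ((1+r²)^{1/2})`. The rotational part drops out
since `⟨v^⊥, v⟩ = 0`. For the radial part, with `a = |z|`, `b = |w|` and `φ ≥ c` on `[0, ∞)`,
Cauchy–Schwarz `⟨z, w⟩ ≤ ab` gives
`⟨φ(a) z - φ(b) w, z - w⟩ - c|z - w|² ≥ (a - b)((φ(a) - c) a - (φ(b) - c) b) ≥ 0`,
the last step because `r ↦ (φ(r) - c) r` is nondecreasing when `φ` is. Finally `ψ ≥ 1/2` on `[0, ∞)`,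
so `c = θ/2 ≥ m/2` works.
-/

/-- The sigmoid function. -/
noncomputable def sigmoid (x : ℝ) : ℝ := Real.exp x / (1 + Real.exp x)

/-- Rotation by 90 degrees in `ℝ²`: `z^⊥ = (-z₂, z₁)`. -/
noncomputable def perp (z : EuclideanSpace ℝ (Fin 2)) : EuclideanSpace ℝ (Fin 2) :=
  (WithLp.equiv 2 (Fin 2 → ℝ)).symm ![-(z 1), z 0]

/-- The drift `b_θ(z) = -θ z ψ((1+|z|²)^{1/2}) + ε z^⊥`. -/
noncomputable def drift2d (θ ε : ℝ) (z : EuclideanSpace ℝ (Fin 2)) :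
    EuclideanSpace ℝ (Fin 2) :=
  (-(θ * sigmoid (Real.sqrt (1 + ‖z‖^2)))) • z + ε • perp z

open RealInnerProductSpace Set

lemma sigmoid_monotone : Monotone sigmoid := by
  intro x y hxy
  have hx := Real.exp_pos x
  rw [sigmoid, sigmoid, div_le_div_iff₀ (by positivity) (by positivity)]
  nlinarith [Real.exp_le_exp.2 hxy]

lemma half_le_sigmoid {x : ℝ} (hx : 0 ≤ x) : 1 / 2 ≤ sigmoid x := by
  rw [sigmoid, le_div_iff₀ (by positivity)]
  linarith [Real.one_le_exp hx]

section Radial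

variable {E : Type*} [NormedAddCommGroup E] [InnerProductSpace ℝ E]

lemma inner_radial_sub_nonneg {φ : ℝ → ℝ} (hφ : MonotoneOn φ (Ici 0))
    (hφ_nonneg : ∀ r, 0 ≤ r → 0 ≤ φ r) (z w : E) :
    0 ≤ ⟪φ ‖z‖ • z - φ ‖w‖ • w, z - w⟫ := by
  set a := ‖z‖
  set b := ‖w‖
  have ha : 0 ≤ a := norm_nonneg z
  have hb : 0 ≤ b := norm_nonneg w
  have hexpand : ⟪φ a • z - φ b • w, z - w⟫ = φ a * a ^ 2 + φ b * b ^ 2 - (φ a + φ b) * ⟪z, w⟫ := by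
    simp only [inner_sub_left, inner_sub_right, real_inner_smul_left,
      real_inner_self_eq_norm_sq, real_inner_comm z w]
    ring
  have hcs : (φ a + φ b) * ⟪z, w⟫ ≤ (φ a + φ b) * (a * b) :=
    mul_le_mul_of_nonneg_left (real_inner_le_norm z w) (add_nonneg (hφ_nonneg a ha) (hφ_nonneg b hb))
  have hmono : 0 ≤ (a - b) * (φ a * a - φ b * b) := by
    rcases le_total a b with hab | hab
    · have := hφ ha hb hab
      have := hφ_nonneg a ha
      exact mul_nonneg_of_nonpos_of_nonpos (by linarith) (by nlinarith)
    · have := hφ hb ha hab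
      have := hφ_nonneg b hb
      exact mul_nonneg (by linarith) (by nlinarith)
  rw [hexpand]
  nlinarith

lemma le_inner_radial_sub {φ : ℝ → ℝ} {c : ℝ} (hφ : MonotoneOn φ (Ici 0))
    (hφc : ∀ r, 0 ≤ r → c ≤ φ r) (z w : E) :
    c * ‖z - w‖ ^ 2 ≤ ⟪φ ‖z‖ • z - φ ‖w‖ • w, z - w⟫ := by
  have hshift : φ ‖z‖ • z - φ ‖w‖ • w
      = ((fun r => φ r - c) ‖z‖ • z - (fun r => φ r - c) ‖w‖ • w) + c • (z - w) := by
    simp only [sub_smul, smul_sub]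
    abel
  have hnonneg := inner_radial_sub_nonneg (φ := fun r => φ r - c)
    (fun x hx y hy hxy => sub_le_sub_right (hφ hx hy hxy) c)
    (fun r hr => sub_nonneg.2 (hφc r hr)) z w
  rw [hshift, inner_add_left, real_inner_smul_left, real_inner_self_eq_norm_sq]
  linarith

end Radial

lemma perp_sub (z w : EuclideanSpace ℝ (Fin 2)) : perp z - perp w = perp (z - w) := by
  ext i
  fin_cases i <;> simp [perp, neg_add_eq_sub]

lemma inner_perp_self (v : EuclideanSpace ℝ (Fin 2)) : ⟪perp v, v⟫ = 0 := by
  simp only [perp, PiLp.inner_apply, RCLike.inner_apply, Real.ringHom_apply, Fin.sum_univ_two,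
    WithLp.equiv_symm_apply, Matrix.cons_val_zero, Matrix.cons_val_one, Matrix.cons_val_fin_one]
  ring

noncomputable def driftProfile (θ : ℝ) (r : ℝ) : ℝ := θ * sigmoid (Real.sqrt (1 + r ^ 2))

lemma driftProfile_monotoneOn {θ : ℝ} (hθ : 0 ≤ θ) : MonotoneOn (driftProfile θ) (Ici 0) := by
  intro x (hx : 0 ≤ x) y _ hxy
  refine mul_le_mul_of_nonneg_left (sigmoid_monotone (Real.sqrt_le_sqrt ?_)) hθ
  nlinarith

lemma half_le_driftProfile {θ : ℝ} (hθ : 0 ≤ θ) (r : ℝ) : θ / 2 ≤ driftProfile θ r := by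
  have := mul_le_mul_of_nonneg_left (half_le_sigmoid (Real.sqrt_nonneg (1 + r ^ 2))) hθ
  rw [driftProfile]
  linarith

lemma inner_drift2d_sub (θ ε : ℝ) (z w : EuclideanSpace ℝ (Fin 2)) :
    ⟪drift2d θ ε z - drift2d θ ε w, z - w⟫
      = -⟪driftProfile θ ‖z‖ • z - driftProfile θ ‖w‖ • w, z - w⟫ := by
  have hdiff : drift2d θ ε z - drift2d θ ε w
      = -(driftProfile θ ‖z‖ • z - driftProfile θ ‖w‖ • w) + ε • (perp z - perp w) := by
    simp only [drift2d, driftProfile, neg_smul, smul_sub]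
    abel
  rw [hdiff, inner_add_left, inner_neg_left, real_inner_smul_left, perp_sub, inner_perp_self,
    mul_zero, add_zero]

theorem stmt17_general (m M ε : ℝ) (hm : 0 < m) :
    ∀ θ ∈ Set.Icc m M, ∀ z w : EuclideanSpace ℝ (Fin 2),
      (inner ℝ (drift2d θ ε z - drift2d θ ε w) (z - w) : ℝ) ≤ -(m/2) * ‖z - w‖^2 := by
  intro θ ⟨hmθ, _⟩ z w
  have hθ : 0 ≤ θ := hm.le.trans hmθ
  have hradial := le_inner_radial_sub (driftProfile_monotoneOn hθ)
    (fun r _ => (div_le_div_of_nonneg_right hmθ two_pos.le).trans (half_le_driftProfile hθ r)) z w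
  rw [inner_drift2d_sub]
  linarith

theorem stmt17 (m M ε : ℝ) (hm : 0 < m) (hmM : m ≤ M) :
    ∀ θ ∈ Set.Icc m M, ∀ z w : EuclideanSpace ℝ (Fin 2),
      (inner ℝ (drift2d θ ε z - drift2d θ ε w) (z - w) : ℝ) ≤ -(m/2) * ‖z - w‖^2 :=
  stmt17_general m M ε hm
end
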